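/- Suppose Bernoulli(p) site percolation on a Cayley graph G of Γ (with generating set S) has a unique infinite cluster almost surely. Then the cost of the Bernoulli action of Γ on ([0,1]^Γ, λ^Γ) is at most 1 + θ(p)(|S| − 1). -/

import Mathlib

open MeasureTheory
open scoped ENNReal

/-- `μ` is the Bernoulli(`p`) product measure on site configurations `V → Bool`. -/
def IsBernoulli {V : Type*} (μ : MeasureTheory.Measure (V → Bool)) (p : ℝ) : Prop :=
  ∀ (s : Finset V) (f : V → Bool),
    μ {ω | ∀ v ∈ s, ω v = f v} = ∏ v ∈ s, ENNReal.ofReal (if f v then p else 1 - p)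

/-- The Cayley graph of a group with respect to a generating set `S`. -/
def cayleyGraph (Γ : Type*) [Group Γ] (S : Set Γ) : SimpleGraph Γ :=
  SimpleGraph.fromRel (fun u v => u⁻¹ * v ∈ S)

/-- `u` and `v` are joined by a path all of whose vertices are open in `ω`. -/
def OpenConn {V : Type*} (G : SimpleGraph V) (ω : V → Bool) (u v : V) : Prop :=
  ∃ w : G.Walk u v, ∀ x ∈ w.support, ω x = true

/-- `v` belongs to an infinite cluster of the site percolation configuration `ω`. -/
def InInfCluster {V : Type*} (G : SimpleGraph V) (ω : V → Bool) (v : V) : Prop :=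
  ω v = true ∧ {u | OpenConn G ω v u}.Infinite

/-- The collection of infinite clusters of the configuration `ω`. -/
def InfClusters {V : Type*} (G : SimpleGraph V) (ω : V → Bool) : Set (Set V) :=
  {c | ∃ v, InInfCluster G ω v ∧ c = {u | OpenConn G ω v u}}

/-- The Bernoulli shift action of `Γ` on `[0,1]^Γ` (modelled on `Γ → ℝ`). -/
def shift {Γ : Type*} [Group Γ] (γ : Γ) (x : Γ → ℝ) : Γ → ℝ := fun δ => x (γ⁻¹ * δ)

/-- `μ` is the product over `Γ` of Lebesgue measure on `[0,1]`: coordinates are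
i.i.d. uniform on `[0,1]`. -/
def IsUniformProduct {Γ : Type*} (μ : MeasureTheory.Measure (Γ → ℝ)) : Prop :=
  ∀ (s : Finset Γ) (a : Γ → ℝ), (∀ γ ∈ s, a γ ∈ Set.Icc (0:ℝ) 1) →
    μ {x | ∀ γ ∈ s, x γ ≤ a γ} = ∏ γ ∈ s, ENNReal.ofReal (a γ)

/-- The percolation configuration at level `p` read off from the uniform labels `x`. -/
noncomputable def config {Γ : Type*} (p : ℝ) (x : Γ → ℝ) : Γ → Bool := fun γ => decide (x γ ≤ p)

/-- `V_p(x) = {γ⁻¹x : γ ∈ Γ, x(γ) ≤ p}` inside the Bernoulli space. -/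
def Vp {Γ : Type*} [Group Γ] (p : ℝ) (x : Γ → ℝ) : Set (Γ → ℝ) :=
  {y | ∃ γ : Γ, x γ ≤ p ∧ y = shift γ⁻¹ x}

/-- A single Cayley-graphing edge step staying inside the set `A`. -/
def stepIn {Γ : Type*} [Group Γ] (S : Finset Γ) (A : Set (Γ → ℝ)) (u v : Γ → ℝ) : Prop :=
  u ∈ A ∧ v ∈ A ∧ ∃ s ∈ S, v = shift s u

/-- Connectivity within `A` by Cayley-graphing edges. -/
def ConnIn {Γ : Type*} [Group Γ] (S : Finset Γ) (A : Set (Γ → ℝ)) (u v : Γ → ℝ) : Prop :=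
  Relation.ReflTransGen (stepIn S A) u v

/-- `Y_p`: the set of points lying in an infinite cluster of the graph induced by the
Cayley graphing edges on `V_p(x)`. -/
def Yp {Γ : Type*} [Group Γ] (S : Finset Γ) (p : ℝ) : Set (Γ → ℝ) :=
  {x | x ∈ Vp p x ∧ {y | ConnIn S (Vp p x) x y}.Infinite}

/-- A graphing of a countable equivalence relation `R` on `(X, μ)`: a measurable symmetric
set of edges `E ⊆ R` whose connected components coincide with the `R`-classes. -/
structure Graphing (X : Type*) [MeasurableSpace X] (μ : MeasureTheory.Measure X)
    (R : X → X → Prop) where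
  E : X → X → Prop
  symm : ∀ x y, E x y → E y x
  sub : ∀ ⦃x y⦄, E x y → R x y
  spans : ∀ ⦃x y⦄, R x y → Relation.ReflTransGen E x y
  meas : MeasurableSet {q : X × X | E q.1 q.2}

/-- The cost of a graphing: half the integral of the degree. -/
noncomputable def Graphing.cost {X : Type*} [MeasurableSpace X]
    {μ : MeasureTheory.Measure X} {R : X → X → Prop} (g : Graphing X μ R) : ℝ≥0∞ :=
  (1 / 2) * ∫⁻ x, ({y | g.E x y}.encard : ℝ≥0∞) ∂μ

/-- The cost of a relation: the infimum of the costs of its graphings. -/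
noncomputable def relCost (X : Type*) [MeasurableSpace X] (μ : MeasureTheory.Measure X)
    (R : X → X → Prop) : ℝ≥0∞ :=
  ⨅ g : Graphing X μ R, g.cost

/-- The orbit equivalence relation of the Bernoulli shift action. -/
def orbitRel (Γ : Type*) [Group Γ] (x y : Γ → ℝ) : Prop := ∃ γ : Γ, y = shift γ x

/-!
The orbit relation is spanned by a graphing made of partial shifts `x ↦ γ x` defined on sets
`D`; since every shift preserves `μ`, such a graphing costs at most the sum of the `μ D`.
Let `Z` be the event that the identity lies in an infinite cluster, so `μ Z = θ(p)`, and let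
`G` be the conull set of points whose whole orbit sees a unique infinite cluster. On `G ∩ Z`
keep the Cayley edges `x — s x` with `s ∈ S`, of cost at most `|S| θ(p)`: an open path from `1`
to `γ⁻¹` in the configuration of `x` is a chain of such edges from `x` to `γ x`, so by
uniqueness they connect all points of `G ∩ Z` in an orbit. Attach every other point of `G` by
one edge to a translate in `Z`, at total cost at most `μ Zᶜ = 1 - θ(p)`, and use all orbit edges
on the null set `Gᶜ`, at cost `0`. This is Gaboriau's induction bound
`cost R ≤ cost (R|Z) + μ Zᶜ ≤ |S| θ(p) + 1 - θ(p)`.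
-/

open Set

section Shift

variable {Γ : Type*} [Group Γ]

@[simp] lemma shift_one (x : Γ → ℝ) : shift (1 : Γ) x = x := by
  ext; simp [shift]

lemma shift_shift (a b : Γ) (x : Γ → ℝ) : shift a (shift b x) = shift (a * b) x := by
  ext; simp [shift, mul_assoc]

@[simp] lemma shift_inv_shift (γ : Γ) (x : Γ → ℝ) : shift γ⁻¹ (shift γ x) = x := by
  simp [shift_shift]

@[simp] lemma shift_shift_inv (γ : Γ) (x : Γ → ℝ) : shift γ (shift γ⁻¹ x) = x := by
  simp [shift_shift]

@[fun_prop]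
lemma measurable_shift (γ : Γ) : Measurable (shift γ : (Γ → ℝ) → (Γ → ℝ)) :=
  measurable_pi_lambda _ fun _ => measurable_pi_apply _

end Shift

section UniformProduct

variable {Γ : Type*} {μ : Measure (Γ → ℝ)}

def lowerRect (s : Finset Γ) (a : Γ → ℝ) : Set (Γ → ℝ) := {x | ∀ γ ∈ s, x γ ≤ a γ}

lemma measurableSet_lowerRect (s : Finset Γ) (a : Γ → ℝ) : MeasurableSet (lowerRect s a) := by
  simp only [lowerRect, ← Finset.mem_coe, ofPred_forall]
  exact .biInter s.countable_toSet fun γ _ =>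
    measurableSet_le (measurable_pi_apply γ) measurable_const

lemma isPiSystem_lowerRect : IsPiSystem (range (Function.uncurry (lowerRect (Γ := Γ)))) := by
  classical
  rintro _ ⟨⟨s₁, a₁⟩, rfl⟩ _ ⟨⟨s₂, a₂⟩, rfl⟩ -
  refine ⟨⟨s₁ ∪ s₂, fun γ => min (s₁.piecewise a₁ a₂ γ) (s₂.piecewise a₂ a₁ γ)⟩, ?_⟩
  ext x
  simp only [Function.uncurry, lowerRect, mem_inter_iff, mem_ofPred_eq, Finset.mem_union,
    le_min_iff]
  constructor
  · intro h
    constructor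
    · intro γ hγ; have := h γ (Or.inl hγ); by_cases h₂ : γ ∈ s₂ <;> simp_all
    · intro γ hγ; have := h γ (Or.inr hγ); by_cases h₁ : γ ∈ s₁ <;> simp_all
  · rintro h γ (hγ | hγ) <;> by_cases h₁ : γ ∈ s₁ <;> by_cases h₂ : γ ∈ s₂ <;> simp_all

lemma pi_eq_generateFrom_lowerRect :
    (MeasurableSpace.pi : MeasurableSpace (Γ → ℝ)) =
      MeasurableSpace.generateFrom (range (Function.uncurry (lowerRect (Γ := Γ)))) := by
  refine le_antisymm ?_ (MeasurableSpace.generateFrom_le ?_)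
  · have hid : Measurable[MeasurableSpace.generateFrom (range (Function.uncurry lowerRect)),
        MeasurableSpace.pi] (id : (Γ → ℝ) → (Γ → ℝ)) := by
      refine (@measurable_pi_iff (Γ → ℝ) Γ (fun _ => ℝ) (.generateFrom _) _ id).mpr fun γ =>
        @measurable_of_Iic ℝ (Γ → ℝ) _ _ _ (.generateFrom _) _ _ _ _ fun a => ?_
      refine MeasurableSpace.measurableSet_generateFrom ⟨({γ}, fun _ => a), ?_⟩
      ext x
      simp [lowerRect]
    simpa using hid.comap_le
  · rintro _ ⟨⟨s, a⟩, rfl⟩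
    exact measurableSet_lowerRect s a

lemma preimage_shift_lowerRect [Group Γ] (γ : Γ) (s : Finset Γ) (a : Γ → ℝ) :
    shift γ ⁻¹' lowerRect s a = lowerRect (s.map (mulLeftEmbedding γ⁻¹)) (fun δ => a (γ * δ)) := by
  ext x
  simp [lowerRect, shift]

lemma IsUniformProduct.map_shift [Group Γ] (hμ : IsUniformProduct μ) (γ : Γ) :
    IsUniformProduct (μ.map (shift γ)) := by
  intro s a ha
  change μ.map (shift γ) (lowerRect s a) = _
  rw [Measure.map_apply (measurable_shift γ) (measurableSet_lowerRect s a),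
    preimage_shift_lowerRect]
  refine (hμ _ _ (by simpa using ha)).trans ?_
  simp [Finset.prod_map]

variable [Countable Γ]

lemma IsUniformProduct.ae_mem_Ioc (hμ : IsUniformProduct μ) [IsProbabilityMeasure μ] :
    ∀ᵐ x ∂μ, ∀ γ, x γ ∈ Ioc (0 : ℝ) 1 := by
  have hle (γ : Γ) {a : ℝ} (ha : a ∈ Icc (0 : ℝ) 1) : μ {x | x γ ≤ a} = ENNReal.ofReal a := by
    simpa [lowerRect] using hμ {γ} (fun _ => a) fun _ _ => ha
  refine ae_all_iff.mpr fun γ => ?_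
  have h0 : ∀ᵐ x ∂μ, 0 < x γ := by
    simpa [ae_iff] using hle γ (a := 0) (by simp)
  have h1 : ∀ᵐ x ∂μ, x γ ≤ 1 := by
    rw [ae_iff, ← prob_compl_eq_one_iff]
    · simpa [compl_ofPred] using hle γ (a := 1) (by simp)
    · exact (measurableSet_le (measurable_pi_apply γ) measurable_const).compl
  filter_upwards [h0, h1] with x hx0 hx1 using ⟨hx0, hx1⟩

lemma IsUniformProduct.measure_lowerRect (hμ : IsUniformProduct μ) [IsProbabilityMeasure μ]
    (s : Finset Γ) (a : Γ → ℝ) :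
    μ (lowerRect s a) = ∏ γ ∈ s, ENNReal.ofReal (max 0 (min (a γ) 1)) := by
  rw [← hμ s _ fun γ _ => ⟨le_max_left _ _, max_le zero_le_one (min_le_right _ _)⟩]
  refine measure_congr ?_
  filter_upwards [hμ.ae_mem_Ioc] with x hx
  refine propext (forall₂_congr fun γ _ => ?_)
  obtain ⟨hx0, hx1⟩ := hx γ
  rw [le_max_iff, le_min_iff]
  exact ⟨fun h => Or.inr ⟨h, hx1⟩, fun h => h.elim (fun h => absurd h hx0.not_ge) And.left⟩

lemma IsUniformProduct.unique {ν : Measure (Γ → ℝ)} (hμ : IsUniformProduct μ)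
    (hν : IsUniformProduct ν) [IsProbabilityMeasure μ] [IsProbabilityMeasure ν] : μ = ν := by
  refine ext_of_generate_finite _ pi_eq_generateFrom_lowerRect isPiSystem_lowerRect ?_ (by simp)
  rintro _ ⟨⟨s, a⟩, rfl⟩
  simp only [Function.uncurry, hμ.measure_lowerRect, hν.measure_lowerRect]

lemma IsUniformProduct.measurePreserving_shift [Group Γ] (hμ : IsUniformProduct μ)
    [IsProbabilityMeasure μ] (γ : Γ) : MeasurePreserving (shift γ) μ μ :=
  have := Measure.isProbabilityMeasure_map (μ := μ) (measurable_shift γ).aemeasurable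
  ⟨measurable_shift γ, (hμ.map_shift γ).unique hμ⟩

end UniformProduct

section PartialShiftEdges

variable {Γ : Type*} [Group Γ] {ι : Type*} (g : ι → Γ) (D : ι → Set (Γ → ℝ))

def partialShiftEdges (x y : Γ → ℝ) : Prop :=
  ∃ i, (x ∈ D i ∧ y = shift (g i) x) ∨ (y ∈ D i ∧ x = shift (g i) y)

variable {g D}

lemma partialShiftEdges.symm {x y : Γ → ℝ} (h : partialShiftEdges g D x y) :
    partialShiftEdges g D y x :=
  h.imp fun _ => Or.symm

lemma partialShiftEdges_of_mem {i : ι} {x : Γ → ℝ} (hx : x ∈ D i) :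
    partialShiftEdges g D x (shift (g i) x) :=
  ⟨i, .inl ⟨hx, rfl⟩⟩

lemma partialShiftEdges.orbitRel {x y : Γ → ℝ} (h : partialShiftEdges g D x y) :
    orbitRel Γ x y := by
  obtain ⟨i, ⟨-, rfl⟩ | ⟨-, rfl⟩⟩ := h
  · exact ⟨g i, rfl⟩
  · exact ⟨(g i)⁻¹, by simp⟩

lemma measurableSet_partialShiftEdges [Countable Γ] [Countable ι]
    (hD : ∀ i, MeasurableSet (D i)) :
    MeasurableSet {q : (Γ → ℝ) × (Γ → ℝ) | partialShiftEdges g D q.1 q.2} := by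
  have hD' (i : ι) : Measurable (· ∈ D i) := measurable_mem.mpr (hD i)
  simp only [partialShiftEdges, measurableSet_setOfPred]
  fun_prop

lemma encard_setOf_eq_tsum_indicator (P : ι → Prop) :
    (({i | P i}.encard : ℕ∞) : ℝ≥0∞) = ∑' i, {i | P i}.indicator 1 i := by
  rw [← ENNReal.tsum_set_one, ← tsum_subtype]
  rfl

lemma encard_partialShiftEdges_le (x : Γ → ℝ) :
    (({y | partialShiftEdges g D x y}.encard : ℕ∞) : ℝ≥0∞) ≤
      ∑' i, ((D i).indicator 1 x + (D i).indicator 1 (shift (g i)⁻¹ x)) := by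
  have hsub : {y | partialShiftEdges g D x y} ⊆ (fun i => shift (g i) x) '' {i | x ∈ D i} ∪
      (fun i => shift (g i)⁻¹ x) '' {i | shift (g i)⁻¹ x ∈ D i} := by
    rintro y ⟨i, ⟨hx, rfl⟩ | ⟨hy, rfl⟩⟩
    · exact .inl ⟨i, hx, rfl⟩
    · exact .inr ⟨i, by simpa using hy, by simp⟩
  calc (({y | partialShiftEdges g D x y}.encard : ℕ∞) : ℝ≥0∞)
      ≤ (({i | x ∈ D i}.encard + {i | shift (g i)⁻¹ x ∈ D i}.encard : ℕ∞) : ℝ≥0∞) := by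
        gcongr
        exact (encard_le_encard hsub).trans <| (encard_union_le _ _).trans <|
          add_le_add (encard_image_le _ _) (encard_image_le _ _)
    _ = ∑' i, ((D i).indicator 1 x + (D i).indicator 1 (shift (g i)⁻¹ x)) := by
        rw [ENat.toENNReal_add, encard_setOf_eq_tsum_indicator, encard_setOf_eq_tsum_indicator,
          ENNReal.tsum_add]
        rfl

variable [Countable ι] {μ : Measure (Γ → ℝ)}

-- Each edge is counted at both endpoints; at the far endpoint the count of label `i`
-- integrates to `μ (D i)` again because the shifts preserve `μ`.
lemma lintegral_encard_partialShiftEdges_le (hμ : ∀ γ, MeasurePreserving (shift γ) μ μ)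
    (hD : ∀ i, MeasurableSet (D i)) :
    ∫⁻ x, ({y | partialShiftEdges g D x y}.encard : ℝ≥0∞) ∂μ ≤ 2 * ∑' i, μ (D i) :=
  calc ∫⁻ x, ({y | partialShiftEdges g D x y}.encard : ℝ≥0∞) ∂μ
      ≤ ∫⁻ x, ∑' i, ((D i).indicator 1 x + (D i).indicator 1 (shift (g i)⁻¹ x)) ∂μ :=
        lintegral_mono encard_partialShiftEdges_le
    _ = ∑' i, (μ (D i) + μ (shift (g i)⁻¹ ⁻¹' D i)) := by
        have hind (i : ι) : Measurable ((D i).indicator (1 : (Γ → ℝ) → ℝ≥0∞)) :=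
          measurable_one.indicator (hD i)
        rw [lintegral_tsum
          (f := fun i x => (D i).indicator 1 x + (D i).indicator 1 (shift (g i)⁻¹ x))
          fun i => ((hind i).add ((hind i).comp (measurable_shift _))).aemeasurable]
        refine tsum_congr fun i => ?_
        rw [lintegral_add_left (hind i), lintegral_indicator_one (hD i),
          ← lintegral_indicator_one (measurable_shift _ (hD i))]
        rfl
    _ = 2 * ∑' i, μ (D i) := by
        simp_rw [(hμ _).measure_preimage (hD _).nullMeasurableSet, ← two_mul,
          ENNReal.tsum_mul_left]

lemma relCost_le_tsum_of_spans [Countable Γ] (hμ : ∀ γ, MeasurePreserving (shift γ) μ μ)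
    (hD : ∀ i, MeasurableSet (D i))
    (hspans : ∀ ⦃x y⦄, orbitRel Γ x y → Relation.ReflTransGen (partialShiftEdges g D) x y) :
    relCost (Γ → ℝ) μ (orbitRel Γ) ≤ ∑' i, μ (D i) := by
  let G : Graphing (Γ → ℝ) μ (orbitRel Γ) :=
    ⟨partialShiftEdges g D, fun _ _ => partialShiftEdges.symm,
      fun _ _ => partialShiftEdges.orbitRel, hspans, measurableSet_partialShiftEdges hD⟩
  calc relCost (Γ → ℝ) μ (orbitRel Γ) ≤ G.cost := iInf_le _ G
    _ ≤ 1 / 2 * (2 * ∑' i, μ (D i)) := by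
        change 1 / 2 * ∫⁻ x, ({y | partialShiftEdges g D x y}.encard : ℝ≥0∞) ∂μ ≤ _
        gcongr
        exact lintegral_encard_partialShiftEdges_le hμ hD
    _ = ∑' i, μ (D i) := by
        rw [← mul_assoc, one_div, ENNReal.inv_mul_cancel two_ne_zero ENNReal.ofNat_ne_top, one_mul]

end PartialShiftEdges

section Percolation

open SimpleGraph

variable {V : Type*} {G : SimpleGraph V} {ω : V → Bool} {u v w : V}

lemma openConn_refl (hv : ω v = true) : OpenConn G ω v v :=
  ⟨.nil, by simpa using hv⟩

lemma OpenConn.symm (h : OpenConn G ω u v) : OpenConn G ω v u :=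
  let ⟨p, hp⟩ := h
  ⟨p.reverse, fun x hx => hp x (by simpa using hx)⟩

lemma OpenConn.trans (huv : OpenConn G ω u v) (hvw : OpenConn G ω v w) : OpenConn G ω u w :=
  let ⟨p, hp⟩ := huv
  let ⟨q, hq⟩ := hvw
  ⟨p.append q, fun x hx => (Walk.mem_support_append_iff _ _).mp hx |>.elim (hp x) (hq x)⟩

lemma OpenConn.left (h : OpenConn G ω u v) : ω u = true :=
  let ⟨p, hp⟩ := h
  hp u p.start_mem_support

lemma openConn_of_adj (hadj : G.Adj u v) (hu : ω u = true) (hv : ω v = true) :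
    OpenConn G ω u v :=
  ⟨.cons hadj .nil, by simp [hu, hv]⟩

lemma InInfCluster.of_openConn (hu : InInfCluster G ω u) (huv : OpenConn G ω u v) :
    InInfCluster G ω v :=
  ⟨huv.symm.left, hu.2.mono fun _ hw => huv.symm.trans hw⟩

lemma existsUnique_mem_infClusters_iff :
    (∃! c, c ∈ InfClusters G ω) ↔
      (∃ v, InInfCluster G ω v) ∧
        ∀ u v, InInfCluster G ω u → InInfCluster G ω v → OpenConn G ω u v := by
  constructor
  · rintro ⟨_, ⟨v₀, hv₀, rfl⟩, huniq⟩
    refine ⟨⟨v₀, hv₀⟩, fun u v hu hv => ?_⟩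
    have hcu := huniq _ ⟨u, hu, rfl⟩
    have hcv := huniq _ ⟨v, hv, rfl⟩
    have : v ∈ {x | OpenConn G ω v x} := openConn_refl hv.1
    rwa [hcv, ← hcu] at this
  · rintro ⟨⟨v₀, hv₀⟩, hconn⟩
    refine ⟨_, ⟨v₀, hv₀, rfl⟩, ?_⟩
    rintro _ ⟨v, hv, rfl⟩
    ext x
    exact ⟨(hconn v₀ v hv₀ hv).trans, (hconn v₀ v hv₀ hv).symm.trans⟩

lemma InInfCluster.reflTransGen_of_openConn (hu : InInfCluster G ω u) (huv : OpenConn G ω u v) :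
    Relation.ReflTransGen (fun a b => G.Adj a b ∧ InInfCluster G ω a ∧ InInfCluster G ω b)
      u v := by
  obtain ⟨p, hp⟩ := huv
  induction p with
  | nil => exact .refl
  | @cons a b c hadj q ih =>
    have hb : InInfCluster G ω b :=
      hu.of_openConn (openConn_of_adj hadj hu.1 (hp b (by simp [q.start_mem_support])))
    exact .head ⟨hadj, hu, hb⟩ (ih hb fun x hx => hp x (by simp [hx]))

lemma OpenConn.map {V' : Type*} {G' : SimpleGraph V'} {ω : V' → Bool} (f : G →g G')
    (h : OpenConn G (ω ∘ f) u v) : OpenConn G' ω (f u) (f v) :=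
  let ⟨p, hp⟩ := h
  ⟨p.map f, by simpa [Walk.support_map] using hp⟩

lemma InInfCluster.map_iso {V' : Type*} {G' : SimpleGraph V'} {ω : V' → Bool} (φ : G ≃g G')
    (h : InInfCluster G (ω ∘ φ) v) : InInfCluster G' ω (φ v) := by
  refine ⟨h.1, (h.2.image φ.injective.injOn).mono ?_⟩
  rintro _ ⟨w, hw, rfl⟩
  exact hw.map φ.toHom

lemma inInfCluster_comp_iso_iff {V' : Type*} {G' : SimpleGraph V'} {ω : V' → Bool}
    (φ : G ≃g G') : InInfCluster G (ω ∘ φ) v ↔ InInfCluster G' ω (φ v) := by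
  refine ⟨InInfCluster.map_iso φ, fun h => ?_⟩
  simpa [Function.comp_def] using InInfCluster.map_iso φ.symm (ω := ω ∘ φ) (v := φ v)
    (by simpa [Function.comp_def])

lemma Set.infinite_iff_exists_notMem_finset {α : Type*} {s : Set α} :
    s.Infinite ↔ ∀ t : Finset α, ∃ a ∈ s, a ∉ t :=
  ⟨Set.Infinite.exists_notMem_finset, fun h hfin =>
    let ⟨_, ha, hat⟩ := h hfin.toFinset
    hat (hfin.mem_toFinset.mpr ha)⟩

variable [Countable V] {Ω : Type*} [MeasurableSpace Ω] {ω : Ω → V → Bool}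

lemma measurable_openConn (hω : ∀ v, Measurable fun x => ω x v) (u v : V) :
    Measurable fun x => OpenConn G (ω x) u v := by
  have : Countable (G.Walk u v) := Walk.support_injective.countable
  unfold OpenConn
  fun_prop

lemma measurable_inInfCluster (hω : ∀ v, Measurable fun x => ω x v) (v : V) :
    Measurable fun x => InInfCluster G (ω x) v := by
  have := measurable_openConn (G := G) hω
  simp only [InInfCluster, Set.infinite_iff_exists_notMem_finset]
  fun_prop

lemma measurableSet_existsUnique_mem_infClusters (hω : ∀ v, Measurable fun x => ω x v) :
    MeasurableSet {x | ∃! c, c ∈ InfClusters G (ω x)} := by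
  have := measurable_openConn (G := G) hω
  have := measurable_inInfCluster (G := G) hω
  simp only [existsUnique_mem_infClusters_iff, measurableSet_setOfPred]
  fun_prop

end Percolation

section Cayley

variable {Γ : Type*}

lemma measurable_config (p : ℝ) (v : Γ) : Measurable fun x : Γ → ℝ => config p x v :=
  measurable_to_bool <| by
    simp only [config, preimage, mem_singleton_iff, decide_eq_true_eq]
    exact measurableSet_le (measurable_pi_apply v) measurable_const

variable [Group Γ]

def cayleyGraphMulLeft (S : Set Γ) (a : Γ) : cayleyGraph Γ S ≃g cayleyGraph Γ S :=
  { Equiv.mulLeft a with map_rel_iff' := by simp [cayleyGraph, mul_assoc] }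

lemma inInfCluster_config_shift_inv_iff (S : Set Γ) (p : ℝ) (a : Γ) (x : Γ → ℝ) (u : Γ) :
    InInfCluster (cayleyGraph Γ S) (config p (shift a⁻¹ x)) u ↔
      InInfCluster (cayleyGraph Γ S) (config p x) (a * u) := by
  have : config p (shift a⁻¹ x) = config p x ∘ cayleyGraphMulLeft S a := by
    ext; simp [config, shift, cayleyGraphMulLeft]
  rw [this, inInfCluster_comp_iso_iff]
  rfl

end Cayley

section ShiftCore

variable {Γ : Type*} [Group Γ] {U : Set (Γ → ℝ)} {x : Γ → ℝ}

def shiftCore (U : Set (Γ → ℝ)) : Set (Γ → ℝ) := ⋂ γ : Γ, shift γ ⁻¹' U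

lemma shift_mem_shiftCore (hx : x ∈ shiftCore U) (γ : Γ) : shift γ x ∈ shiftCore U := by
  simp only [shiftCore, mem_iInter, mem_preimage, shift_shift] at hx ⊢
  exact fun δ => hx (δ * γ)

lemma shiftCore_subset : shiftCore U ⊆ U := fun x hx => by
  simpa using mem_iInter.mp hx 1

lemma measurableSet_shiftCore [Countable Γ] (hU : MeasurableSet U) :
    MeasurableSet (shiftCore U) :=
  .iInter fun γ => measurable_shift γ hU

lemma measure_compl_shiftCore [Countable Γ] {μ : Measure (Γ → ℝ)}
    (hμ : ∀ γ, MeasurePreserving (shift γ) μ μ) (hU : MeasurableSet U) (hUc : μ Uᶜ = 0) :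
    μ (shiftCore U)ᶜ = 0 := by
  rw [shiftCore, compl_iInter]
  exact measure_iUnion_null fun γ => by
    rw [← preimage_compl, (hμ γ).measure_preimage hU.compl.nullMeasurableSet, hUc]

end ShiftCore

section ClusterGraphing

variable {Γ : Type*} [Group Γ] (S : Finset Γ) (p : ℝ) (e : ℕ → Γ)

def infClusterAtOne : Set (Γ → ℝ) := {x | InInfCluster (cayleyGraph Γ S) (config p x) 1}

def uniqueInfCluster : Set (Γ → ℝ) := {x | ∃! c, c ∈ InfClusters (cayleyGraph Γ S) (config p x)}

def clusterShift : (S ⊕ ℕ) ⊕ Γ → Γ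
  | .inl (.inl s) => s
  | .inl (.inr n) => e n
  | .inr γ => γ

-- For `e` an enumeration of `Γ`, label `n` attaches `x ∉ Z` to `shift (e n) x` for the first `n`
-- with `shift (e n) x ∈ Z`, where `Z = infClusterAtOne S p`.
def clusterDomain : (S ⊕ ℕ) ⊕ Γ → Set (Γ → ℝ)
  | .inl (.inl s) =>
      (shiftCore (uniqueInfCluster S p) ∩ infClusterAtOne S p) ∩
        shift s ⁻¹' (shiftCore (uniqueInfCluster S p) ∩ infClusterAtOne S p)
  | .inl (.inr n) =>
      (shiftCore (uniqueInfCluster S p) \ infClusterAtOne S p) ∩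
        disjointed (fun m => shift (e m) ⁻¹' infClusterAtOne S p) n
  | .inr _ => (shiftCore (uniqueInfCluster S p))ᶜ

abbrev clusterEdges : (Γ → ℝ) → (Γ → ℝ) → Prop :=
  partialShiftEdges (clusterShift S e) (clusterDomain S p e)

variable {S p e} {x : Γ → ℝ}

lemma shift_inv_mem_infClusterAtOne_iff {a : Γ} :
    shift a⁻¹ x ∈ infClusterAtOne S p ↔ InInfCluster (cayleyGraph Γ S) (config p x) a := by
  simpa [infClusterAtOne] using inInfCluster_config_shift_inv_iff (S : Set Γ) p a x 1

lemma clusterEdges_shift_of_mem {s : Γ} (hs : s ∈ S)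
    (hx : x ∈ shiftCore (uniqueInfCluster S p) ∩ infClusterAtOne S p)
    (hsx : shift s x ∈ shiftCore (uniqueInfCluster S p) ∩ infClusterAtOne S p) :
    clusterEdges S p e x (shift s x) :=
  partialShiftEdges_of_mem (D := clusterDomain S p e) (i := .inl (.inl ⟨s, hs⟩)) ⟨hx, hsx⟩

lemma reflTransGen_clusterEdges_shift {γ : Γ}
    (hx : x ∈ shiftCore (uniqueInfCluster S p) ∩ infClusterAtOne S p)
    (hγx : shift γ x ∈ infClusterAtOne S p) :
    Relation.ReflTransGen (clusterEdges S p e) x (shift γ x) := by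
  have hA (a : Γ) (ha : InInfCluster (cayleyGraph Γ S) (config p x) a) :
      shift a⁻¹ x ∈ shiftCore (uniqueInfCluster S p) ∩ infClusterAtOne S p :=
    ⟨shift_mem_shiftCore hx.1 _, shift_inv_mem_infClusterAtOne_iff.mpr ha⟩
  have h1 : InInfCluster (cayleyGraph Γ S) (config p x) 1 :=
    shift_inv_mem_infClusterAtOne_iff.mp (by simpa using hx.2)
  have hγ : InInfCluster (cayleyGraph Γ S) (config p x) γ⁻¹ :=
    shift_inv_mem_infClusterAtOne_iff.mp (by simpa using hγx)
  have hconn := (existsUnique_mem_infClusters_iff.mp (shiftCore_subset hx.1)).2 _ _ h1 hγ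
  have step (u w : Γ) (hs : w⁻¹ * u ∈ S) (hu : InInfCluster (cayleyGraph Γ S) (config p x) u)
      (hw : InInfCluster (cayleyGraph Γ S) (config p x) w) :
      clusterEdges S p e (shift u⁻¹ x) (shift w⁻¹ x) := by
    have hwu : shift (w⁻¹ * u) (shift u⁻¹ x) = shift w⁻¹ x := by
      rw [shift_shift, mul_inv_cancel_right]
    simpa [hwu] using clusterEdges_shift_of_mem hs (hA u hu) (hwu ▸ hA w hw)
  -- The vertex `a` of the Cayley graph of `config p x` is the point `shift a⁻¹ x` of the orbit.
  have hlift := (h1.reflTransGen_of_openConn hconn).lift (fun a => shift a⁻¹ x)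
    fun a b ⟨hadj, ha, hb⟩ => by
      obtain ⟨-, hs | hs⟩ := (SimpleGraph.fromRel_adj _ a b).mp hadj
      · exact (step b a hs hb ha).symm
      · exact step a b hs ha hb
  simpa [Function.onFun] using hlift

lemma exists_reflTransGen_clusterEdges_shift (he : Function.Surjective e)
    (hx : x ∈ shiftCore (uniqueInfCluster S p)) :
    ∃ γ, shift γ x ∈ shiftCore (uniqueInfCluster S p) ∩ infClusterAtOne S p ∧
      Relation.ReflTransGen (clusterEdges S p e) x (shift γ x) := by
  by_cases hxZ : x ∈ infClusterAtOne S p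
  · exact ⟨1, by simpa using And.intro hx hxZ, by simpa using Relation.ReflTransGen.refl⟩
  obtain ⟨v, hv⟩ := (existsUnique_mem_infClusters_iff.mp (shiftCore_subset hx)).1
  obtain ⟨n, hn⟩ := he v⁻¹
  have hxU : x ∈ ⋃ m, shift (e m) ⁻¹' infClusterAtOne S p :=
    mem_iUnion.mpr ⟨n, by rwa [mem_preimage, hn, shift_inv_mem_infClusterAtOne_iff]⟩
  rw [← iUnion_disjointed] at hxU
  obtain ⟨m, hm⟩ := mem_iUnion.mp hxU
  have hmZ : shift (e m) x ∈ infClusterAtOne S p := disjointed_subset _ m hm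
  exact ⟨e m, ⟨shift_mem_shiftCore hx _, hmZ⟩, .single <|
    partialShiftEdges_of_mem (D := clusterDomain S p e) (i := .inl (.inr m)) ⟨⟨hx, hxZ⟩, hm⟩⟩

lemma reflTransGen_clusterEdges_of_orbitRel (he : Function.Surjective e)
    {x y : Γ → ℝ} (hxy : orbitRel Γ x y) :
    Relation.ReflTransGen (clusterEdges S p e) x y := by
  obtain ⟨γ, rfl⟩ := hxy
  by_cases hx : x ∈ shiftCore (uniqueInfCluster S p)
  · obtain ⟨α, hα, hxα⟩ := exists_reflTransGen_clusterEdges_shift he hx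
    obtain ⟨β, hβ, hyβ⟩ :=
      exists_reflTransGen_clusterEdges_shift he (shift_mem_shiftCore hx γ)
    have hαβ : shift (β * γ * α⁻¹) (shift α x) = shift β (shift γ x) := by
      rw [shift_shift, inv_mul_cancel_right, shift_shift]
    have hmid := reflTransGen_clusterEdges_shift (e := e) hα (γ := β * γ * α⁻¹)
      (hαβ ▸ hβ.2)
    rw [hαβ] at hmid
    have hβy := Relation.ReflTransGen.mono (fun _ _ h => partialShiftEdges.symm h) _ _
      (Relation.ReflTransGen.swap _ _ hyβ)
    exact hxα.trans (hmid.trans hβy)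
  · exact .single (partialShiftEdges_of_mem (D := clusterDomain S p e) (i := .inr γ) hx)

variable [Countable Γ] (S p e)

lemma measurableSet_infClusterAtOne : MeasurableSet (infClusterAtOne S p) :=
  (measurable_inInfCluster (measurable_config p) 1).setOf

lemma measurableSet_uniqueInfCluster : MeasurableSet (uniqueInfCluster S p) :=
  measurableSet_existsUnique_mem_infClusters (measurable_config p)

lemma measurableSet_clusterDomain : ∀ i, MeasurableSet (clusterDomain S p e i)
  | .inl (.inl _) =>
    have hA := (measurableSet_shiftCore (measurableSet_uniqueInfCluster S p)).inter
      (measurableSet_infClusterAtOne S p)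
    hA.inter (measurable_shift _ hA)
  | .inl (.inr n) =>
    ((measurableSet_shiftCore (measurableSet_uniqueInfCluster S p)).diff
      (measurableSet_infClusterAtOne S p)).inter
      (.disjointed (fun _ => measurable_shift _ (measurableSet_infClusterAtOne S p)) n)
  | .inr _ => (measurableSet_shiftCore (measurableSet_uniqueInfCluster S p)).compl

variable {S p e}

lemma tsum_measure_clusterDomain_le {μ : Measure (Γ → ℝ)}
    (hμ : ∀ γ, MeasurePreserving (shift γ) μ μ) (hU : μ (uniqueInfCluster S p)ᶜ = 0) :
    ∑' i, μ (clusterDomain S p e i) ≤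
      S.card * μ (infClusterAtOne S p) + μ (infClusterAtOne S p)ᶜ := by
  rw [ENNReal.summable.tsum_sum ENNReal.summable, ENNReal.summable.tsum_sum ENNReal.summable]
  have hcayley : ∑' s : S, μ (clusterDomain S p e (.inl (.inl s))) ≤
      S.card * μ (infClusterAtOne S p) :=
    calc ∑' s : S, μ (clusterDomain S p e (.inl (.inl s)))
        ≤ ∑' s : S, μ (infClusterAtOne S p) :=
          ENNReal.tsum_le_tsum fun _ => measure_mono (inter_subset_left.trans inter_subset_right)
      _ = S.card * μ (infClusterAtOne S p) := by simp
  have hattach : ∑' n, μ (clusterDomain S p e (.inl (.inr n))) ≤ μ (infClusterAtOne S p)ᶜ := by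
    rw [← measure_iUnion (f := fun n => clusterDomain S p e (.inl (.inr n)))
      (fun _ _ hmn => (disjoint_disjointed _ hmn).mono inter_subset_right inter_subset_right)
      fun n => measurableSet_clusterDomain S p e (.inl (.inr n))]
    exact measure_mono (iUnion_subset fun n => inter_subset_left.trans (sdiff_subset_compl _ _))
  have hbad : ∑' γ : Γ, μ (clusterDomain S p e (.inr γ)) = 0 := by
    simp [clusterDomain, measure_compl_shiftCore hμ (measurableSet_uniqueInfCluster S p) hU]
  rw [hbad, add_zero]
  exact add_le_add hcayley hattach

end ClusterGraphing

lemma ENNReal.natCast_mul_add_one_sub_le (k : ℕ) {θ : ℝ≥0∞} (hθ : θ ≤ 1) :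
    k * θ + (1 - θ) ≤ 1 + θ * (k - 1) := by
  rcases k with _ | k
  · simp
  · rw [Nat.cast_succ, ENNReal.add_sub_cancel_right ENNReal.one_ne_top, add_mul, one_mul, add_assoc,
      add_tsub_cancel_of_le hθ, add_comm, mul_comm]

theorem stmt12_general {Γ : Type*} [Group Γ] [Countable Γ] (S : Finset Γ)
    (μ : Measure (Γ → ℝ)) [IsProbabilityMeasure μ] (hμ : IsUniformProduct μ)
    (p : ℝ)
    (huniq : μ {x | ∃! c, c ∈ InfClusters (cayleyGraph Γ (S : Set Γ)) (config p x)} = 1) :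
    relCost (Γ → ℝ) μ (orbitRel Γ) ≤
      1 + μ {x | InInfCluster (cayleyGraph Γ (S : Set Γ)) (config p x) 1}
            * ((S.card : ℝ≥0∞) - 1) := by
  obtain ⟨e, he⟩ := exists_surjective_nat Γ
  have hshift := hμ.measurePreserving_shift
  have hU : μ (uniqueInfCluster S p)ᶜ = 0 :=
    (prob_compl_eq_zero_iff (measurableSet_uniqueInfCluster S p)).mpr huniq
  calc relCost (Γ → ℝ) μ (orbitRel Γ)
      ≤ ∑' i, μ (clusterDomain S p e i) :=
        relCost_le_tsum_of_spans hshift (measurableSet_clusterDomain S p e)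
          fun _ _ => reflTransGen_clusterEdges_of_orbitRel he
    _ ≤ S.card * μ (infClusterAtOne S p) + μ (infClusterAtOne S p)ᶜ :=
        tsum_measure_clusterDomain_le hshift hU
    _ = S.card * μ (infClusterAtOne S p) + (1 - μ (infClusterAtOne S p)) := by
        rw [prob_compl_eq_one_sub (measurableSet_infClusterAtOne S p)]
    _ ≤ _ := ENNReal.natCast_mul_add_one_sub_le _ prob_le_one

/-- If Bernoulli(p) site percolation on the Cayley graph has a unique infinite cluster
almost surely, then the cost of the Bernoulli action is at most `1 + θ(p)(|S| - 1)`. -/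
theorem stmt12 {Γ : Type*} [Group Γ] [Countable Γ] [Infinite Γ] (S : Finset Γ)
    (hS : ∀ s ∈ S, s⁻¹ ∈ S) (hgen : Subgroup.closure (S : Set Γ) = ⊤)
    (μ : Measure (Γ → ℝ)) [IsProbabilityMeasure μ] (hμ : IsUniformProduct μ)
    (p : ℝ) (hp : p ∈ Set.Icc (0:ℝ) 1)
    (huniq : μ {x | ∃! c, c ∈ InfClusters (cayleyGraph Γ (S : Set Γ)) (config p x)} = 1) :
    relCost (Γ → ℝ) μ (orbitRel Γ) ≤
      1 + μ {x | InInfCluster (cayleyGraph Γ (S : Set Γ)) (config p x) 1}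
            * ((S.card : ℝ≥0∞) - 1) :=
  stmt12_general S μ hμ p huniq
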